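/- arXiv:2006.03862 — 3 statements merged into one kernel-verified Lean document; each statement's English description precedes it below -/
import Mathlib

section
/- Let Π = (X,U,F,G,g) and Π' = (X',U',F',G',g') be optimal control problems with terminal costs G : X → [0,∞] and G' : X' → [0,∞], such that: (i) X' is a cover of X by nonempty subsets of X; (ii) U' ⊆ U; and whenever x ∈ Ω ∈ X', x' ∈ Ω' ∈ X', u ∈ U': (iii) if Ω' ∩ (⋃_{y∈Ω} F(y,u)) ≠ ∅ then Ω' ∈ F'(Ω,u); (iv) G(x) ≤ G'(Ω); (v) g(x,x',u) ≤ g'(Ω,Ω',u). Let μ' be a memoryless controller for Π' and let Q : X → Set X' be the quantizer defined by Ω ∈ Q(p) ⟺ p ∈ Ω. Then the refined controller μ'∘Q (the memoryless controller on X mapping p to ⋃_{Ω ∈ Q(p)} μ'(Ω)) satisfies L(p, μ'∘Q) ≤ sup{ L'(Ω, μ') : Ω ∈ X', p ∈ Ω } for all p ∈ X, where L and L' are the closed-loop performances of Π and Π'. -/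
open scoped ENNReal Classical

namespace TwoPhase

noncomputable section

variable {X U : Type*}

/-- The behaviour of the transition system `(X, U, F)` initialized at `p`:
`x 0 = p` and `x (t+1) ∈ F (x t) (u t)` for all `t`. -/
def Behaviour (F : X → U → Set X) (p : X) (u : ℕ → U) (x : ℕ → X) : Prop :=
  x 0 = p ∧ ∀ t, x (t + 1) ∈ F (x t) (u t)

/-- A general (history-dependent) controller, encoded as a map depending on the
time `t` and the full signals, required to be strict (nonempty valued) and causal:
its value at time `t` only depends on `x|[0;t]` and `u|[0;t)`. -/
def IsController (μ : ℕ → (ℕ → X) → (ℕ → U) → Set (U × Bool)) : Prop :=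
  (∀ t x u, (μ t x u).Nonempty) ∧
    ∀ (t : ℕ) (x x' : ℕ → X) (u u' : ℕ → U),
      (∀ s ≤ t, x s = x' s) → (∀ s < t, u s = u' s) → μ t x u = μ t x' u'

/-- The history-dependent controller induced by a memoryless controller. -/
def ofMemoryless (μ : X → Set (U × Bool)) : ℕ → (ℕ → X) → (ℕ → U) → Set (U × Bool) :=
  fun t x _ => μ (x t)

/-- The closed-loop behaviour `B_p(μ × S)`. -/
def ClosedLoop (F : X → U → Set X) (μ : ℕ → (ℕ → X) → (ℕ → U) → Set (U × Bool))
    (p : X) (u : ℕ → U) (v : ℕ → Bool) (x : ℕ → X) : Prop :=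
  Behaviour F p u x ∧ ∀ t, (u t, v t) ∈ μ t x u

/-- The total cost `J(u,v,x)` associated with running cost `g` and
trajectory cost `G` (where `G T x` is the cost of the finite trajectory `x|[0;T]`):
if `v` is not identically `0` and `T = min v⁻¹(1)`, it is
`∑_{t<T} g (x t) (x (t+1)) (u t) + G T x`; otherwise it is `∞`. -/
def totalCost (g : X → X → U → ℝ≥0∞) (G : ℕ → (ℕ → X) → ℝ≥0∞)
    (u : ℕ → U) (v : ℕ → Bool) (x : ℕ → X) : ℝ≥0∞ :=
  if h : ∃ t, v t = true then
    (∑ t ∈ Finset.range (Nat.find h), g (x t) (x (t + 1)) (u t)) + G (Nat.find h) x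
  else ⊤

/-- The closed-loop performance `L(p, μ)` of the optimal control problem
`(X, U, F, G, g)`. -/
def perf (F : X → U → Set X) (g : X → X → U → ℝ≥0∞) (G : ℕ → (ℕ → X) → ℝ≥0∞)
    (μ : ℕ → (ℕ → X) → (ℕ → U) → Set (U × Bool)) (p : X) : ℝ≥0∞ :=
  ⨆ (u : ℕ → U) (v : ℕ → Bool) (x : ℕ → X) (_ : ClosedLoop F μ p u v x),
    totalCost g G u v x

/-- The value function `V(p)` of the optimal control problem `(X, U, F, G, g)`. -/
def value (F : X → U → Set X) (g : X → X → U → ℝ≥0∞) (G : ℕ → (ℕ → X) → ℝ≥0∞)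
    (p : X) : ℝ≥0∞ :=
  ⨅ (μ : ℕ → (ℕ → X) → (ℕ → U) → Set (U × Bool)) (_ : IsController μ),
    perf F g G μ p

/-- The (terminal) trajectory cost of the reach-avoid problem associated with `A`
and `G₀`. -/
def reachAvoidCost (A : Set X) (G₀ : X → ℝ≥0∞) : ℕ → (ℕ → X) → ℝ≥0∞ :=
  fun T x => if x T ∈ A then G₀ (x T) else ⊤

/-- The trajectory cost of the two-phase reach-avoid problem associated with
`A₁`, `A₂` and `G₀`. -/
def twoPhaseCost (A₁ A₂ : Set X) (G₀ : X → ℝ≥0∞) : ℕ → (ℕ → X) → ℝ≥0∞ :=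
  fun t x => if (∃ s ≤ t, x s ∈ A₁) ∧ x t ∈ A₂ then G₀ (x t) else ⊤

/-- A trajectory cost which is a terminal cost `G : X → [0,∞]`. -/
def termCost (G : X → ℝ≥0∞) : ℕ → (ℕ → X) → ℝ≥0∞ := fun T x => G (x T)

/-- The stopping component of a memoryless controller is single-valued. -/
def SVStop (μ : X → Set (U × Bool)) : Prop :=
  ∀ q : X, (∀ w ∈ μ q, w.2 = false) ∨ (∀ w ∈ μ q, w.2 = true)

/-- The composed controller `μ` of Proposition 1: it plays `μ₁` as long as the
stopping signal `w` of `μ₁` along `x` satisfies `w s = 0` for all `s ∈ [0;t]`,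
and plays `μ₂` afterwards. -/
def composed (μ₁ μ₂ : X → Set (U × Bool)) :
    ℕ → (ℕ → X) → (ℕ → U) → Set (U × Bool) :=
  fun t x _ =>
    if ∀ s ≤ t, ∀ w ∈ μ₁ (x s), w.2 = false then μ₁ (x t) else μ₂ (x t)

/-- The refined controller `μ' ∘ Q` of a memoryless abstract controller `μ'`,
where `Q` is the quantizer: `(μ' ∘ Q) p = ⋃_{Ω ∈ X', p ∈ Ω} μ' Ω`. -/
def refineCtrl {XA : Set (Set X)} {UA : Set U} (μ' : ↥XA → Set (↥UA × Bool)) :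
    X → Set (U × Bool) :=
  fun p => ⋃ (Ω : ↥XA) (_ : p ∈ (Ω : Set X)),
    (fun w : ↥UA × Bool => ((w.1 : U), w.2)) '' μ' Ω

end

end TwoPhase

/-!
Every closed-loop trajectory `(u, v, x)` of the refined controller is shadowed by a closed-loop
trajectory of the abstract problem: pick at each time a cell `Ω t ∋ x t` and an abstract input
`u' t` witnessing `(u t, v t) ∈ (μ' ∘ Q)(x t)`. Condition (iii) makes `Ω` a trajectory of `F'`
under `u'`, and (iv), (v) bound the concrete cost by the abstract cost term by term, with the
same stopping signal `v`. The abstract trajectory starts in a cell containing `p`.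
-/

namespace TwoPhase

section Monotonicity

variable {X U X' U' : Type*}

theorem totalCost_le_totalCost {g : X → X → U → ℝ≥0∞} {G : ℕ → (ℕ → X) → ℝ≥0∞}
    {g' : X' → X' → U' → ℝ≥0∞} {G' : ℕ → (ℕ → X') → ℝ≥0∞}
    {u : ℕ → U} {u' : ℕ → U'} (v : ℕ → Bool) {x : ℕ → X} {y : ℕ → X'}
    (hg : ∀ t, g (x t) (x (t + 1)) (u t) ≤ g' (y t) (y (t + 1)) (u' t))
    (hG : ∀ T, G T x ≤ G' T y) :
    totalCost g G u v x ≤ totalCost g' G' u' v y := by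
  unfold totalCost
  split_ifs
  · gcongr with t
    · exact hg t
    · exact hG _
  · exact le_rfl

theorem totalCost_le_perf {F : X → U → Set X} {g : X → X → U → ℝ≥0∞}
    {G : ℕ → (ℕ → X) → ℝ≥0∞} {μ : ℕ → (ℕ → X) → (ℕ → U) → Set (U × Bool)} {p : X}
    {u : ℕ → U} {v : ℕ → Bool} {x : ℕ → X} (h : ClosedLoop F μ p u v x) :
    totalCost g G u v x ≤ perf F g G μ p :=
  le_iSup₂_of_le u v <| le_iSup₂_of_le x h le_rfl

end Monotonicity

section Refinement

variable {X U : Type*} {XA : Set (Set X)} {UA : Set U}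

theorem mem_refineCtrl {μ' : ↥XA → Set (↥UA × Bool)} {p : X} {a : U} {b : Bool} :
    (a, b) ∈ refineCtrl μ' p ↔ ∃ (Ω : ↥XA) (a' : ↥UA), p ∈ (Ω : Set X) ∧ (a', b) ∈ μ' Ω ∧
      (a' : U) = a := by
  simp only [refineCtrl, Set.mem_iUnion, Set.mem_image, Prod.exists, Prod.mk.injEq]
  constructor
  · rintro ⟨Ω, hp, a', b', hw, rfl, rfl⟩
    exact ⟨Ω, a', hp, hw, rfl⟩
  · rintro ⟨Ω, a', hp, hw, rfl⟩
    exact ⟨Ω, hp, a', b, hw, rfl, rfl⟩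

theorem ClosedLoop.exists_abstract {F : X → U → Set X} {F' : ↥XA → ↥UA → Set ↥XA}
    (hiii : ∀ (Ω Ω' : ↥XA) (u : ↥UA),
      ((Ω' : Set X) ∩ ⋃ y ∈ (Ω : Set X), F y u).Nonempty → Ω' ∈ F' Ω u)
    {μ' : ↥XA → Set (↥UA × Bool)} {p : X} {u : ℕ → U} {v : ℕ → Bool} {x : ℕ → X}
    (h : ClosedLoop F (ofMemoryless (refineCtrl μ')) p u v x) :
    ∃ (Ω : ℕ → ↥XA) (u' : ℕ → ↥UA), (∀ t, x t ∈ (Ω t : Set X)) ∧ (∀ t, (u' t : U) = u t) ∧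
      ClosedLoop F' (ofMemoryless μ') (Ω 0) u' v Ω := by
  obtain ⟨⟨-, hstep⟩, hctrl⟩ := h
  choose Ω u' hmem hμ' hu' using fun t => mem_refineCtrl.mp (hctrl t)
  refine ⟨Ω, u', hmem, hu', ⟨rfl, fun t => hiii _ _ _ ⟨x (t + 1), hmem (t + 1), ?_⟩⟩, hμ'⟩
  exact Set.mem_biUnion (hmem t) (hu' t ▸ hstep t)

end Refinement

theorem refinement_le_general
    {X U : Type*}
    (F : X → U → Set X)
    (g : X → X → U → ℝ≥0∞) (G : X → ℝ≥0∞)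
    (XA : Set (Set X)) (UA : Set U)
    (F' : ↥XA → ↥UA → Set ↥XA)
    (g' : ↥XA → ↥XA → ↥UA → ℝ≥0∞) (G' : ↥XA → ℝ≥0∞)
    (hiii : ∀ (Ω Ω' : ↥XA) (u : ↥UA),
      ((Ω' : Set X) ∩ ⋃ y ∈ (Ω : Set X), F y u).Nonempty → Ω' ∈ F' Ω u)
    (hiv : ∀ (x : X) (Ω : ↥XA), x ∈ (Ω : Set X) → G x ≤ G' Ω)
    (hv : ∀ (x x' : X) (Ω Ω' : ↥XA) (u : ↥UA),
      x ∈ (Ω : Set X) → x' ∈ (Ω' : Set X) → g x x' u ≤ g' Ω Ω' u)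
    (μ' : ↥XA → Set (↥UA × Bool))
    (p : X) :
    perf F g (termCost G) (ofMemoryless (refineCtrl μ')) p ≤
      ⨆ (Ω : ↥XA) (_ : p ∈ (Ω : Set X)),
        perf F' g' (termCost G') (ofMemoryless μ') Ω := by
  refine iSup₂_le fun u v => iSup₂_le fun x hcl => ?_
  obtain ⟨Ω, u', hmem, hu', hcl'⟩ := hcl.exists_abstract hiii
  have hp : p ∈ (Ω 0 : Set X) := hcl.1.1 ▸ hmem 0
  calc totalCost g (termCost G) u v x
      ≤ totalCost g' (termCost G') u' v Ω :=
        totalCost_le_totalCost v (fun t => hu' t ▸ hv _ _ _ _ _ (hmem t) (hmem (t + 1)))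
          (fun T => hiv _ _ (hmem T))
    _ ≤ perf F' g' (termCost G') (ofMemoryless μ') (Ω 0) := totalCost_le_perf hcl'
    _ ≤ _ := le_iSup₂_of_le (Ω 0) hp le_rfl

/-- Theorem 2 of the paper, from [ReissigRungger18]. Let
`Π = (X,U,F,G,g)` and `Π' = (X',U',F',G',g')` be optimal control problems with
terminal costs `G`, `G'` such that (i) `X'` is a cover of `X` by nonempty sets,
(ii) `U' ⊆ U`, and whenever `x ∈ Ω ∈ X'`, `x' ∈ Ω' ∈ X'`, `u ∈ U'`:
(iii) `Ω' ∩ F(Ω,u) ≠ ∅ ⇒ Ω' ∈ F'(Ω,u)`, (iv) `G x ≤ G' Ω`,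
(v) `g x x' u ≤ g' Ω Ω' u`.  Then for every memoryless abstract controller `μ'`
the refined controller `μ' ∘ Q` satisfies
`L(p, μ'∘Q) ≤ sup { L'(Ω,μ') | p ∈ Ω }` for all `p ∈ X`. -/
theorem refinement_le
    {X U : Type*} [Nonempty X] [Nonempty U]
    (F : X → U → Set X) (hF : ∀ x u, (F x u).Nonempty)
    (g : X → X → U → ℝ≥0∞) (G : X → ℝ≥0∞)
    (XA : Set (Set X)) (UA : Set U)
    (hcover : ∀ p : X, ∃ Ω ∈ XA, p ∈ Ω) (hΩne : ∀ Ω ∈ XA, Ω.Nonempty)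
    (F' : ↥XA → ↥UA → Set ↥XA) (hF' : ∀ Ω u, (F' Ω u).Nonempty)
    (g' : ↥XA → ↥XA → ↥UA → ℝ≥0∞) (G' : ↥XA → ℝ≥0∞)
    (hiii : ∀ (Ω Ω' : ↥XA) (u : ↥UA),
      ((Ω' : Set X) ∩ ⋃ y ∈ (Ω : Set X), F y u).Nonempty → Ω' ∈ F' Ω u)
    (hiv : ∀ (x : X) (Ω : ↥XA), x ∈ (Ω : Set X) → G x ≤ G' Ω)
    (hv : ∀ (x x' : X) (Ω Ω' : ↥XA) (u : ↥UA),
      x ∈ (Ω : Set X) → x' ∈ (Ω' : Set X) → g x x' u ≤ g' Ω Ω' u)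
    (μ' : ↥XA → Set (↥UA × Bool)) (hμ' : ∀ Ω, (μ' Ω).Nonempty)
    (p : X) :
    perf F g (termCost G) (ofMemoryless (refineCtrl μ')) p ≤
      ⨆ (Ω : ↥XA) (_ : p ∈ (Ω : Set X)),
        perf F' g' (termCost G') (ofMemoryless μ') Ω :=
  refinement_le_general F g G XA UA F' g' G' hiii hiv hv μ' p

end TwoPhase
end

section
/- Let X, U be nonempty sets, g : X × X × U → [0,∞] a running cost, A₁, A₂ ⊆ X nonempty, G₀ : X → [0,∞], and let J be the total cost of the two-phase reach-avoid problem associated with A₁, A₂, G₀, and J₂ the total cost of the reach-avoid problem associated with A₂ and G₀ (both with running cost g). Let (u,v,x) ∈ (U × {0,1} × X)^ℕ with v not identically 0, set T = min v⁻¹(1), and let τ ∈ ℕ with τ ≤ T and x(τ) ∈ A₁. Then J(u,v,x) = Σ_{t=0}^{τ−1} g(x(t),x(t+1),u(t)) + J₂(σ^τ u, σ^τ v, σ^τ x), where σ^τ denotes the backward shift by τ, (σ^τ f)(t) = f(t+τ). -/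
open scoped ENNReal Classical

namespace TwoPhase

section

variable {X U : Type*}

theorem totalCost_eq_sum_add_totalCost_shift (g : X → X → U → ℝ≥0∞)
    {G G' : ℕ → (ℕ → X) → ℝ≥0∞} (u : ℕ → U) (v : ℕ → Bool) (x : ℕ → X)
    (hv : ∃ t, v t = true) {τ : ℕ} (hτ : τ ≤ Nat.find hv)
    (hG : G (Nat.find hv) x = G' (Nat.find hv - τ) (fun t => x (t + τ))) :
    totalCost g G u v x =
      (∑ t ∈ Finset.range τ, g (x t) (x (t + 1)) (u t)) +
        totalCost g G' (fun t => u (t + τ)) (fun t => v (t + τ)) (fun t => x (t + τ)) := by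
  set T := Nat.find hv
  have hv' : ∃ t, v (t + τ) = true :=
    ⟨T - τ, by rw [Nat.sub_add_cancel hτ]; exact Nat.find_spec hv⟩
  have hfind : Nat.find hv' = T - τ := by
    have := Nat.find_add (hₘ := hv') hτ
    omega
  have hsum : ∑ t ∈ Finset.range T, g (x t) (x (t + 1)) (u t) =
      (∑ t ∈ Finset.range τ, g (x t) (x (t + 1)) (u t)) +
        ∑ t ∈ Finset.range (T - τ), g (x (t + τ)) (x (t + 1 + τ)) (u (t + τ)) := by
    rw [← Nat.add_sub_cancel' hτ, Finset.sum_range_add, Nat.add_sub_cancel_left]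
    refine congrArg _ (Finset.sum_congr rfl fun t _ => ?_)
    rw [Nat.add_comm τ t, Nat.add_right_comm]
  rw [totalCost, dif_pos hv, totalCost, dif_pos hv', hfind, hsum, hG, add_assoc]

theorem twoPhaseCost_eq_reachAvoidCost_shift (A₁ A₂ : Set X) (G₀ : X → ℝ≥0∞) (x : ℕ → X)
    {τ T : ℕ} (hτ : τ ≤ T) (hx : x τ ∈ A₁) :
    twoPhaseCost A₁ A₂ G₀ T x = reachAvoidCost A₂ G₀ (T - τ) (fun t => x (t + τ)) := by
  simp only [twoPhaseCost, reachAvoidCost, Nat.sub_add_cancel hτ]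
  exact if_congr (and_iff_right ⟨τ, hτ, hx⟩) rfl rfl

end

theorem totalCost_twoPhase_split_general
    {X U : Type*}
    (g : X → X → U → ℝ≥0∞) (G₀ : X → ℝ≥0∞)
    (A₁ A₂ : Set X)
    (u : ℕ → U) (v : ℕ → Bool) (x : ℕ → X)
    (hv : ∃ t, v t = true) (τ : ℕ) (hτ : τ ≤ Nat.find hv) (hx : x τ ∈ A₁) :
    totalCost g (twoPhaseCost A₁ A₂ G₀) u v x =
      (∑ t ∈ Finset.range τ, g (x t) (x (t + 1)) (u t)) +
        totalCost g (reachAvoidCost A₂ G₀)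
          (fun t => u (t + τ)) (fun t => v (t + τ)) (fun t => x (t + τ)) :=
  totalCost_eq_sum_add_totalCost_shift g u v x hv hτ
    (twoPhaseCost_eq_reachAvoidCost_shift A₁ A₂ G₀ x hτ hx)

/-- cost-splitting identity in the proof of Proposition 1.
Let `J` be the total cost of the two-phase reach-avoid problem associated with
`A₁`, `A₂`, `G₀` and `J₂` the total cost of the reach-avoid problem associated
with `A₂` and `G₀`, both with running cost `g`. If `v` is not identically `0`,
`T = min v⁻¹(1)`, `τ ≤ T` and `x τ ∈ A₁`, then
`J(u,v,x) = ∑_{t<τ} g (x t) (x (t+1)) (u t) + J₂(σ^τ u, σ^τ v, σ^τ x)`. -/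
theorem totalCost_twoPhase_split
    {X U : Type*} [Nonempty X] [Nonempty U]
    (g : X → X → U → ℝ≥0∞) (G₀ : X → ℝ≥0∞)
    (A₁ A₂ : Set X) (hA₁ : A₁.Nonempty) (hA₂ : A₂.Nonempty)
    (u : ℕ → U) (v : ℕ → Bool) (x : ℕ → X)
    (hv : ∃ t, v t = true) (τ : ℕ) (hτ : τ ≤ Nat.find hv) (hx : x τ ∈ A₁) :
    totalCost g (twoPhaseCost A₁ A₂ G₀) u v x =
      (∑ t ∈ Finset.range τ, g (x t) (x (t + 1)) (u t)) +
        totalCost g (reachAvoidCost A₂ G₀)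
          (fun t => u (t + τ)) (fun t => v (t + τ)) (fun t => x (t + τ)) :=
  totalCost_twoPhase_split_general g G₀ A₁ A₂ u v x hv τ hτ hx

end TwoPhase
end

section
/- Let Π be the two-phase reach-avoid problem on transition system S = (X,U,F) with running cost g, associated with nonempty A₁, A₂ ⊆ X and G₀ : X → [0,∞], with closed-loop performance L. Let Π₂ be the reach-avoid problem associated with A₂ and G₀ with closed-loop performance L₂, μ₂ a memoryless controller, Π₁ the reach-avoid problem associated with A₁ and terminal cost L₂(·,μ₂) with closed-loop performance L₁, μ₁ a memoryless controller with single-valued stopping component, and μ the composed controller that applies μ₁ until its stopping signal first equals 1 and μ₂ thereafter. Then L(p,μ) ≤ L₁(p,μ₁) for all p ∈ X. -/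
open scoped ENNReal Classical

/-!
Along a closed-loop trajectory of the composed controller, let `T₁` be the first time at which
`μ₁` stops. Up to `T₁` the trajectory follows `μ₁`, and it can be continued after `T₁` by any
`μ₁`-trajectory, which stops immediately; so the running cost up to `T₁` plus `L₂(x T₁)` (or `∞`
if `x T₁ ∉ A₁`) is a cost of `μ₁` for `Π₁`. From `T₁` on the trajectory follows `μ₂`, so its
remaining cost for `Π` is a cost of `μ₂` for `Π₂` from `x T₁`, hence at most `L₂(x T₁)`.
-/

namespace TwoPhase

section

variable {α X U : Type*}

def splice (n : ℕ) (a b : ℕ → α) : ℕ → α := fun t => if t < n then a t else b (t - n)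

theorem splice_of_lt {n t : ℕ} (a b : ℕ → α) (h : t < n) : splice n a b t = a t := if_pos h

theorem splice_of_le {n t : ℕ} {a b : ℕ → α} (hb : b 0 = a n) (h : t ≤ n) :
    splice n a b t = a t := by
  rcases h.lt_or_eq with h | rfl
  · exact splice_of_lt a b h
  · simp [splice, hb]

theorem splice_add (n t : ℕ) (a b : ℕ → α) : splice n a b (n + t) = b t := by
  simp [splice]

variable {F : X → U → Set X} {g : X → X → U → ℝ≥0∞} {G : ℕ → (ℕ → X) → ℝ≥0∞}
  {p : X} {u : ℕ → U} {v : ℕ → Bool} {x : ℕ → X}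

theorem le_perf {μ : ℕ → (ℕ → X) → (ℕ → U) → Set (U × Bool)} (h : ClosedLoop F μ p u v x) :
    totalCost g G u v x ≤ perf F g G μ p :=
  le_iSup_of_le u <| le_iSup_of_le v <| le_iSup_of_le x <| le_iSup_of_le h le_rfl

theorem totalCost_eq_top (hv : ∀ t, v t = false) : totalCost g G u v x = ⊤ :=
  dif_neg (by simp [hv])

theorem totalCost_eq_of_first_stop {T : ℕ} (hT : v T = true) (hlt : ∀ t < T, v t = false) :
    totalCost g G u v x = ∑ t ∈ Finset.range T, g (x t) (x (t + 1)) (u t) + G T x := by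
  have h : ∃ t, v t = true := ⟨T, hT⟩
  have hfind : Nat.find h = T := (Nat.find_eq_iff h).2 ⟨hT, fun t ht => by simp [hlt t ht]⟩
  rw [totalCost, dif_pos h, hfind]

theorem totalCost_le_sum_add_totalCost_shift {G' : ℕ → (ℕ → X) → ℝ≥0∞} {n : ℕ}
    (hv : ∀ t < n, v t = false) (hG : ∀ T, G (n + T) x ≤ G' T (fun t => x (n + t))) :
    totalCost g G u v x ≤ ∑ t ∈ Finset.range n, g (x t) (x (t + 1)) (u t) +
      totalCost g G' (fun t => u (n + t)) (fun t => v (n + t)) (fun t => x (n + t)) := by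
  by_cases hstop : ∃ t, v (n + t) = true
  · set T := Nat.find hstop
    have hshift : ∀ t < T, v (n + t) = false := fun t ht => by simpa using Nat.find_min hstop ht
    have hlt : ∀ t < n + T, v t = false := fun t ht => by
      rcases lt_or_ge t n with htn | htn
      · exact hv t htn
      · obtain ⟨k, rfl⟩ := Nat.exists_eq_add_of_le htn
        exact hshift k (by omega)
    rw [totalCost_eq_of_first_stop (Nat.find_spec hstop) hlt,
      totalCost_eq_of_first_stop (v := fun t => v (n + t)) (Nat.find_spec hstop) hshift,
      Finset.sum_range_add]
    simp only [add_assoc]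
    gcongr
    exact hG T
  · push Not at hstop
    rw [totalCost_eq_top (u := fun t => u (n + t)) (by simpa using hstop), add_top]
    exact le_top

theorem Behaviour.shift (h : Behaviour F p u x) (n : ℕ) :
    Behaviour F (x n) (fun t => u (n + t)) (fun t => x (n + t)) :=
  ⟨rfl, fun t => h.2 (n + t)⟩

section Memoryless

variable {μ : X → Set (U × Bool)}

theorem exists_closedLoop_ofMemoryless (hF : ∀ x u, (F x u).Nonempty)
    (hμ : ∀ q, (μ q).Nonempty) (p : X) :
    ∃ u v x, ClosedLoop F (ofMemoryless μ) p u v x := by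
  choose act hact using hμ
  choose next hnext using hF
  let x : ℕ → X := fun t => (fun q => next q (act q).1)^[t] p
  refine ⟨fun t => (act (x t)).1, fun t => (act (x t)).2, x, ⟨rfl, fun t => ?_⟩,
    fun t => hact (x t)⟩
  simp only [x, Function.iterate_succ_apply']
  exact hnext _ _

theorem closedLoop_splice {n : ℕ} {u' : ℕ → U} {v' : ℕ → Bool} {x' : ℕ → X}
    (hx0 : x 0 = p) (hstep : ∀ t < n, x (t + 1) ∈ F (x t) (u t))
    (hmem : ∀ t < n, (u t, v t) ∈ μ (x t)) (h : ClosedLoop F (ofMemoryless μ) (x n) u' v' x') :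
    ClosedLoop F (ofMemoryless μ) p (splice n u u') (splice n v v') (splice n x x') := by
  have hx' : x' 0 = x n := h.1.1
  refine ⟨⟨(splice_of_le hx' n.zero_le).trans hx0, fun t => ?_⟩, fun t => ?_⟩
  · rcases lt_or_ge t n with ht | ht
    · rw [splice_of_le hx' ht, splice_of_le hx' ht.le, splice_of_lt u u' ht]
      exact hstep t ht
    · obtain ⟨k, rfl⟩ := Nat.exists_eq_add_of_le ht
      rw [add_assoc, splice_add, splice_add, splice_add]
      exact h.1.2 k
  · show (splice n u u' t, splice n v v' t) ∈ μ (splice n x x' t)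
    rcases lt_or_ge t n with ht | ht
    · rw [splice_of_lt u u' ht, splice_of_lt v v' ht, splice_of_lt x x' ht]
      exact hmem t ht
    · obtain ⟨k, rfl⟩ := Nat.exists_eq_add_of_le ht
      rw [splice_add, splice_add, splice_add]
      exact h.2 k

/-- Continue the prefix by any closed-loop trajectory of `μ` from `x n`: it stops at once. -/
theorem sum_add_reachAvoidCost_le_perf (hF : ∀ x u, (F x u).Nonempty)
    (hμ : ∀ q, (μ q).Nonempty) {A : Set X} {G₁ : X → ℝ≥0∞} {n : ℕ}
    (hx0 : x 0 = p) (hstep : ∀ t < n, x (t + 1) ∈ F (x t) (u t))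
    (hmem : ∀ t < n, (u t, v t) ∈ μ (x t)) (hv : ∀ t < n, v t = false)
    (hstop : ∀ w ∈ μ (x n), w.2 = true) :
    ∑ t ∈ Finset.range n, g (x t) (x (t + 1)) (u t) + reachAvoidCost A G₁ n x ≤
      perf F g (reachAvoidCost A G₁) (ofMemoryless μ) p := by
  obtain ⟨u', v', x', h'⟩ := exists_closedLoop_ofMemoryless hF hμ (x n)
  have hx' : x' 0 = x n := h'.1.1
  have hv'n : splice n v v' n = true := by
    have h0 : (u' 0, v' 0) ∈ μ (x n) := hx' ▸ h'.2 0
    simpa [splice] using hstop _ h0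
  have hv'lt : ∀ t < n, splice n v v' t = false := fun t ht => by
    rw [splice_of_lt v v' ht, hv t ht]
  refine le_of_eq_of_le ?_ (le_perf (closedLoop_splice hx0 hstep hmem h'))
  rw [totalCost_eq_of_first_stop hv'n hv'lt]
  congr 1
  · refine Finset.sum_congr rfl fun t ht => ?_
    have ht : t < n := Finset.mem_range.mp ht
    rw [splice_of_le hx' ht.le, splice_of_le hx' ht, splice_of_lt u u' ht]
  · simp only [reachAvoidCost, splice_of_le hx' le_rfl]

end Memoryless

theorem twoPhaseCost_add_le {A₁ A₂ : Set X} {G₀ : X → ℝ≥0∞} {n : ℕ} (hA : x n ∈ A₁) (T : ℕ) :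
    twoPhaseCost A₁ A₂ G₀ (n + T) x ≤ reachAvoidCost A₂ G₀ T (fun t => x (n + t)) := by
  have hreach : ∃ s ≤ n + T, x s ∈ A₁ := ⟨n, by omega, hA⟩
  simp [twoPhaseCost, reachAvoidCost, hreach]

variable {μ₁ μ₂ : X → Set (U × Bool)}

theorem ClosedLoop.composed_mem_left (h : ClosedLoop F (composed μ₁ μ₂) p u v x) {t : ℕ}
    (hgo : ∀ s ≤ t, ∀ w ∈ μ₁ (x s), w.2 = false) : (u t, v t) ∈ μ₁ (x t) :=
  (if_pos hgo : composed μ₁ μ₂ t x u = μ₁ (x t)) ▸ h.2 t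

theorem ClosedLoop.composed_mem_right (h : ClosedLoop F (composed μ₁ μ₂) p u v x) {s t : ℕ}
    (hst : s ≤ t) (hs : ¬ ∀ w ∈ μ₁ (x s), w.2 = false) : (u t, v t) ∈ μ₂ (x t) := by
  have hgo : ¬ ∀ r ≤ t, ∀ w ∈ μ₁ (x r), w.2 = false := fun hgo => hs (hgo s hst)
  exact (if_neg hgo : composed μ₁ μ₂ t x u = μ₂ (x t)) ▸ h.2 t

end

theorem perf_composed_le_general
    {X U : Type*}
    (F : X → U → Set X) (hF : ∀ x u, (F x u).Nonempty)
    (g : X → X → U → ℝ≥0∞) (G₀ : X → ℝ≥0∞)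
    (A₁ A₂ : Set X)
    (μ₂ : X → Set (U × Bool))
    (μ₁ : X → Set (U × Bool)) (hμ₁ : ∀ q, (μ₁ q).Nonempty) (hsv : SVStop μ₁)
    (p : X) :
    perf F g (twoPhaseCost A₁ A₂ G₀) (composed μ₁ μ₂) p ≤
      perf F g
        (reachAvoidCost A₁
          (fun q => perf F g (reachAvoidCost A₂ G₀) (ofMemoryless μ₂) q))
        (ofMemoryless μ₁) p := by
  refine iSup₂_le fun u v => iSup₂_le fun x hcl => ?_
  by_cases hgo : ∀ t, ∀ w ∈ μ₁ (x t), w.2 = false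
  · have hmem : ∀ t, (u t, v t) ∈ μ₁ (x t) := fun t => hcl.composed_mem_left fun s _ => hgo s
    have hv : ∀ t, v t = false := fun t => hgo t _ (hmem t)
    rw [totalCost_eq_top hv, ← totalCost_eq_top hv]
    exact le_perf ⟨hcl.1, hmem⟩
  have hstops : ∃ t, ¬ ∀ w ∈ μ₁ (x t), w.2 = false := not_forall.mp hgo
  set T₁ := Nat.find hstops
  have hmem : ∀ t < T₁, (u t, v t) ∈ μ₁ (x t) := fun t ht =>
    hcl.composed_mem_left fun s hs => not_not.mp (Nat.find_min hstops (hs.trans_lt ht))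
  have hv : ∀ t < T₁, v t = false := fun t ht =>
    not_not.mp (Nat.find_min hstops ht) _ (hmem t ht)
  have hstop : ∀ w ∈ μ₁ (x T₁), w.2 = true := (hsv _).resolve_left (Nat.find_spec hstops)
  refine le_trans ?_ (sum_add_reachAvoidCost_le_perf hF hμ₁ hcl.1.1 (fun t _ => hcl.1.2 t)
    hmem hv hstop)
  by_cases hA : x T₁ ∈ A₁
  · have htail : ClosedLoop F (ofMemoryless μ₂) (x T₁) (fun t => u (T₁ + t))
        (fun t => v (T₁ + t)) (fun t => x (T₁ + t)) :=
      ⟨hcl.1.shift T₁, fun t => hcl.composed_mem_right (T₁.le_add_right t) (Nat.find_spec hstops)⟩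
    rw [reachAvoidCost, if_pos hA]
    refine (totalCost_le_sum_add_totalCost_shift hv (twoPhaseCost_add_le hA)).trans ?_
    gcongr
    exact le_perf htail
  · simp [reachAvoidCost, hA]

/-- inequality `L(p,μ) ≤ L₁(p,μ₁)` from the proof of
Proposition 1.  With `Π`, `Π₁`, `Π₂`, `μ₁`, `μ₂` and the composed controller
`μ` as in Proposition 1, it holds that `L(p,μ) ≤ L₁(p,μ₁)` for all `p ∈ X`. -/
theorem perf_composed_le
    {X U : Type*} [Nonempty X] [Nonempty U]
    (F : X → U → Set X) (hF : ∀ x u, (F x u).Nonempty)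
    (g : X → X → U → ℝ≥0∞) (G₀ : X → ℝ≥0∞)
    (A₁ A₂ : Set X) (hA₁ : A₁.Nonempty) (hA₂ : A₂.Nonempty)
    (μ₂ : X → Set (U × Bool)) (hμ₂ : ∀ q, (μ₂ q).Nonempty)
    (μ₁ : X → Set (U × Bool)) (hμ₁ : ∀ q, (μ₁ q).Nonempty) (hsv : SVStop μ₁)
    (p : X) :
    perf F g (twoPhaseCost A₁ A₂ G₀) (composed μ₁ μ₂) p ≤
      perf F g
        (reachAvoidCost A₁
          (fun q => perf F g (reachAvoidCost A₂ G₀) (ofMemoryless μ₂) q))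
        (ofMemoryless μ₁) p :=
  perf_composed_le_general F hF g G₀ A₁ A₂ μ₂ μ₁ hμ₁ hsv p

end TwoPhase
end
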